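/- arXiv:1810.12861 — 2 statements merged into one kernel-verified Lean document; each statement's English description precedes it below -/
import Mathlib

section
/- Let N be a finite ground set, (N, 𝓜) a matroid of rank K, Z a monotone, submodular, normalized set function on N, c ∈ [0,1] a curvature bound for Z, and g a greedy sequence for (Z, 𝓜) with output G. Then for every Ω ∈ 𝓜 one has (1 + c)·Z(G) ≥ Z(Ω); equivalently, Z(G)/Z(Ω) ≥ 1/(1+c) whenever Z(Ω) > 0. -/
open Finset

/-- Marginal gain of adding `q` to `S`: `ρ_q(S) = Z(S ∪ {q}) − Z(S)`. -/
def marg {α : Type*} [DecidableEq α] (Z : Finset α → ℝ) (q : α) (S : Finset α) : ℝ :=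
  Z (insert q S) - Z S

/-- The set `{g 1, …, g i}` of the first `i` elements of the sequence `g`. -/
def initSeg {α : Type*} [DecidableEq α] (g : ℕ → α) (i : ℕ) : Finset α :=
  (Finset.Icc 1 i).image g

/-!
Let `A` be the total gain of the greedy steps `i` with `g i ∉ Ω`, so `A ≤ Z G`. Adding the greedy
elements to `Ω` one at a time, the curvature bound shows that each step outside `Ω` still gains at
least `(1 - c)` times its greedy gain, so `Z Ω + (1 - c) A ≤ Z (Ω ∪ G)`. Conversely, by Hall's
theorem and matroid augmentation, every `j ∈ Ω \ G` can be matched injectively to a step `i` with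
`g i ∉ Ω` at which `j` was still a feasible choice; greedy choice and submodularity then give
`Z (Ω ∪ G) ≤ Z G + A`. Hence `Z Ω ≤ Z G + c A ≤ (1 + c) Z G`.
-/

section

variable {α : Type*} [DecidableEq α]

lemma initSeg_zero (g : ℕ → α) : initSeg g 0 = ∅ := by
  simp [initSeg]

lemma initSeg_succ (g : ℕ → α) (n : ℕ) :
    initSeg g (n + 1) = insert (g (n + 1)) (initSeg g n) := by
  have : Icc 1 (n + 1) = insert (n + 1) (Icc 1 n) :=
    (insert_Icc_right_eq_Icc_succ (Nat.le_add_left 1 n)).symm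
  rw [initSeg, this, image_insert, initSeg]

lemma initSeg_mono (g : ℕ → α) {m n : ℕ} (h : m ≤ n) : initSeg g m ⊆ initSeg g n :=
  image_subset_image (Icc_subset_Icc le_rfl h)

lemma apply_mem_initSeg (g : ℕ → α) {i n : ℕ} (hi : i ∈ Icc 1 n) : g i ∈ initSeg g n :=
  mem_image_of_mem g hi

lemma card_initSeg {g : ℕ → α} {K n : ℕ} (hg : Set.InjOn g (Set.Icc 1 K)) (hn : n ≤ K) :
    (initSeg g n).card = n := by
  rw [initSeg, card_image_of_injOn, Nat.card_Icc, Nat.add_sub_cancel]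
  exact hg.mono (by simpa using Set.Icc_subset_Icc_right hn)

lemma apply_notMem_initSeg_pred {g : ℕ → α} {K i : ℕ} (hg : Set.InjOn g (Set.Icc 1 K))
    (hi : i ∈ Icc 1 K) : g i ∉ initSeg g (i - 1) := by
  rw [mem_Icc] at hi
  simp only [initSeg, mem_image, mem_Icc, not_exists, not_and]
  intro k hk hgk
  have := hg ⟨hk.1, by omega⟩ ⟨hi.1, hi.2⟩ hgk
  omega

lemma sub_eq_sum_marg_initSeg (Z : Finset α → ℝ) (g : ℕ → α) (B : Finset α) (n : ℕ) :
    Z (B ∪ initSeg g n) - Z B = ∑ i ∈ Icc 1 n, marg Z (g i) (B ∪ initSeg g (i - 1)) := by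
  induction n with
  | zero => simp [initSeg_zero]
  | succ n ih =>
    rw [sum_Icc_succ_top (by omega), ← ih, Nat.add_sub_cancel, marg, initSeg_succ, union_insert]
    ring

structure IsMonotoneSubmodularOn (N : Finset α) (Z : Finset α → ℝ) : Prop where
  mono : ∀ S T : Finset α, S ⊆ T → T ⊆ N → Z S ≤ Z T
  marg_antitone : ∀ S T : Finset α, ∀ x, S ⊆ T → T ⊆ N → x ∈ N → x ∉ T →
    marg Z x T ≤ marg Z x S

def HasCurvatureBound (N : Finset α) (Z : Finset α → ℝ) (c : ℝ) : Prop :=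
  ∀ S ⊆ N, ∀ j ∈ N, j ∉ S → 0 < marg Z j ∅ → (1 - c) * marg Z j ∅ ≤ marg Z j S

namespace IsMonotoneSubmodularOn

variable {N : Finset α} {Z : Finset α → ℝ}

lemma marg_nonneg (hZ : IsMonotoneSubmodularOn N Z) {x : α} {S : Finset α} (hx : x ∈ N)
    (hS : S ⊆ N) : 0 ≤ marg Z x S :=
  sub_nonneg.2 (hZ.mono _ _ (subset_insert x S) (insert_subset hx hS))

lemma apply_union_le_add_sum_marg (hZ : IsMonotoneSubmodularOn N Z) {G F : Finset α}
    (hG : G ⊆ N) (hF : F ⊆ N) : Z (G ∪ F) ≤ Z G + ∑ j ∈ F, marg Z j G := by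
  induction F using Finset.induction_on with
  | empty => simp
  | insert a F ha ih =>
    rw [insert_subset_iff] at hF
    have step : marg Z a (G ∪ F) ≤ marg Z a G := by
      by_cases haGF : a ∈ G ∪ F
      · rw [marg, insert_eq_of_mem haGF, sub_self]
        exact hZ.marg_nonneg hF.1 hG
      · exact hZ.marg_antitone G (G ∪ F) a subset_union_left (union_subset hG hF.2) hF.1 haGF
    rw [marg] at step
    rw [union_insert, sum_insert ha]
    linarith [ih hF.2]

lemma one_sub_mul_marg_le (hZ : IsMonotoneSubmodularOn N Z) {c : ℝ}
    (hcurv : HasCurvatureBound N Z c) {x : α} {S T : Finset α} (hST : S ⊆ T) (hT : T ⊆ N)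
    (hx : x ∈ N) (hxT : x ∉ T) : (1 - c) * marg Z x S ≤ marg Z x T := by
  have hS := hST.trans hT
  have hS_le : marg Z x S ≤ marg Z x ∅ :=
    hZ.marg_antitone ∅ S x (empty_subset S) hS hx (fun h => hxT (hST h))
  have hS_nonneg := hZ.marg_nonneg hx hS
  have hT_nonneg := hZ.marg_nonneg hx hT
  rcases le_or_gt (marg Z x ∅) 0 with h | h
  · rw [show marg Z x S = 0 by linarith, mul_zero]
    exact hT_nonneg
  · have := hcurv T hT x hx hxT h
    rcases le_total c 1 with hc | hc <;> nlinarith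

lemma add_one_sub_mul_sum_le (hZ : IsMonotoneSubmodularOn N Z) {c : ℝ}
    (hcurv : HasCurvatureBound N Z c) {B : Finset α} {g : ℕ → α} {n : ℕ} (hB : B ⊆ N)
    (hgN : initSeg g n ⊆ N) (hg : Set.InjOn g (Set.Icc 1 n)) :
    Z B + (1 - c) * ∑ i ∈ (Icc 1 n).filter (g · ∉ B), marg Z (g i) (initSeg g (i - 1))
      ≤ Z (B ∪ initSeg g n) := by
  rw [← le_sub_iff_add_le', sub_eq_sum_marg_initSeg, mul_sum]
  have hseg : ∀ i ∈ Icc 1 n, initSeg g (i - 1) ⊆ N := fun i hi =>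
    (initSeg_mono g (by rw [mem_Icc] at hi; omega)).trans hgN
  calc ∑ i ∈ (Icc 1 n).filter (g · ∉ B), (1 - c) * marg Z (g i) (initSeg g (i - 1))
      ≤ ∑ i ∈ (Icc 1 n).filter (g · ∉ B), marg Z (g i) (B ∪ initSeg g (i - 1)) := by
        refine sum_le_sum fun i hi => ?_
        rw [mem_filter] at hi
        refine hZ.one_sub_mul_marg_le hcurv subset_union_right (union_subset hB (hseg i hi.1))
          (hgN (apply_mem_initSeg g hi.1)) ?_
        rw [mem_union, not_or]
        exact ⟨hi.2, apply_notMem_initSeg_pred hg hi.1⟩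
    _ ≤ ∑ i ∈ Icc 1 n, marg Z (g i) (B ∪ initSeg g (i - 1)) :=
        sum_le_sum_of_subset_of_nonneg (filter_subset _ _) fun i hi _ =>
          hZ.marg_nonneg (hgN (apply_mem_initSeg g hi)) (union_subset hB (hseg i hi))

end IsMonotoneSubmodularOn

structure IsMatroidIndep (M : Finset α → Prop) : Prop where
  subset : ∀ S T : Finset α, M T → S ⊆ T → M S
  aug : ∀ S T : Finset α, M S → M T → S.card < T.card → ∃ x ∈ T \ S, M (insert x S)

lemma IsMatroidIndep.card_le_of_forall_not_insert {M : Finset α → Prop} (hM : IsMatroidIndep M)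
    {I S : Finset α} (hI : M I) (hS : M S) (h : ∀ x ∈ S \ I, ¬ M (insert x I)) :
    S.card ≤ I.card := by
  by_contra! hlt
  obtain ⟨x, hx, hxI⟩ := hM.aug I S hI hS hlt
  exact h x hx hxI

section Exchange

variable {M : Finset α → Prop} {g : ℕ → α} {K : ℕ}

noncomputable def exchangeIndex (M : Finset α → Prop) (g : ℕ → α) (K : ℕ) (j : α) : ℕ :=
  open Classical in Nat.findGreatest (fun i => M (insert j (initSeg g (i - 1)))) K

lemma exchangeIndex_le (j : α) : exchangeIndex M g K j ≤ K := by
  classical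
  exact Nat.findGreatest_le K

lemma indep_insert_initSeg_exchangeIndex {j : α} (hK : 1 ≤ K) (hj : M {j}) :
    M (insert j (initSeg g (exchangeIndex M g K j - 1))) := by
  classical
  exact Nat.findGreatest_spec (P := fun i => M (insert j (initSeg g (i - 1)))) hK
    (by simpa [initSeg_zero] using hj)

lemma not_indep_insert_initSeg (hM : IsMatroidIndep M) (hK : ∀ S, M S → S.card ≤ K)
    (hg : Set.InjOn g (Set.Icc 1 K)) {j : α} (hj : j ∉ initSeg g K) {t : ℕ}
    (ht : exchangeIndex M g K j ≤ t) : ¬ M (insert j (initSeg g t)) := by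
  classical
  intro hjt
  rcases lt_or_ge t K with htK | htK
  · exact Nat.findGreatest_is_greatest (P := fun i => M (insert j (initSeg g (i - 1))))
      (Nat.lt_succ_of_le ht) htK (by simpa using hjt)
  · have := hK _ (hM.subset _ _ hjt (insert_subset_insert j (initSeg_mono g htK)))
    rw [card_insert_of_notMem hj, card_initSeg hg le_rfl] at this
    omega

lemma card_add_card_filter_mem_le (hM : IsMatroidIndep M) (hK : ∀ S, M S → S.card ≤ K)
    (hg : Set.InjOn g (Set.Icc 1 K)) (hG : M (initSeg g K)) {Ω : Finset α} (hΩ : M Ω)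
    {s : Finset α} (hs : s ⊆ Ω \ initSeg g K) {m : ℕ} (hmK : m ≤ K)
    (hsm : ∀ j ∈ s, exchangeIndex M g K j ≤ m) :
    s.card + ((Icc 1 m).filter (g · ∈ Ω)).card ≤ m := by
  set Q := (Icc 1 m).filter (g · ∈ Ω)
  have hQ_seg : Q.image g ⊆ initSeg g m := image_subset_image (filter_subset _ _)
  have hQ_Ω : Q.image g ⊆ Ω := image_subset_iff.2 fun i hi => (mem_filter.1 hi).2
  have hs_G : ∀ x ∈ s, x ∉ initSeg g K := fun x hx => (mem_sdiff.1 (hs hx)).2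
  have hdisj : Disjoint s (Q.image g) :=
    disjoint_left.2 fun x hx hxQ => hs_G x hx (initSeg_mono g hmK (hQ_seg hxQ))
  have hQ_card : (Q.image g).card = Q.card :=
    card_image_of_injOn (hg.mono fun i hi => by
      simp only [Q, coe_filter, mem_Icc, Set.mem_ofPred_eq] at hi
      exact ⟨hi.1.1, hi.1.2.trans hmK⟩)
  have hS : M (s ∪ Q.image g) :=
    hM.subset _ _ hΩ (union_subset (fun x hx => (mem_sdiff.1 (hs hx)).1) hQ_Ω)
  have key := hM.card_le_of_forall_not_insert (hM.subset _ _ hG (initSeg_mono g hmK)) hS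
    fun x hx => by
      obtain ⟨hxsQ, hxm⟩ := mem_sdiff.1 hx
      rcases mem_union.1 hxsQ with hxs | hxQ
      · exact not_indep_insert_initSeg hM hK hg (hs_G x hxs) (hsm x hxs)
      · exact absurd (hQ_seg hxQ) hxm
  rwa [card_union_of_disjoint hdisj, hQ_card, card_initSeg hg hmK] at key

lemma exists_injective_exchange (hM : IsMatroidIndep M) (hK : ∀ S, M S → S.card ≤ K)
    (hg : Set.InjOn g (Set.Icc 1 K)) (hG : M (initSeg g K)) {Ω : Finset α} (hΩ : M Ω) :
    ∃ f : ↥(Ω \ initSeg g K) → ℕ, Function.Injective f ∧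
      ∀ j, f j ∈ (Icc 1 K).filter (g · ∉ Ω) ∧ M (insert ↑j (initSeg g (f j - 1))) := by
  set t : ↥(Ω \ initSeg g K) → Finset ℕ :=
    fun j => (Icc 1 (exchangeIndex M g K j)).filter (g · ∉ Ω)
  have hall : ∀ s : Finset ↥(Ω \ initSeg g K), s.card ≤ (s.biUnion t).card := by
    intro s
    rcases s.eq_empty_or_nonempty with rfl | hs
    · simp
    -- The sets `t j` grow with `exchangeIndex`, so `s.biUnion t` contains `t j₀` for the `j₀ ∈ s`
    -- of largest index.
    obtain ⟨j₀, hj₀, hmax⟩ := exists_max_image s (fun j => exchangeIndex M g K j) hs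
    have hcount := card_add_card_filter_mem_le hM hK hg hG hΩ
      (s := s.map (Function.Embedding.subtype _))
      (fun x hx => by obtain ⟨j, -, rfl⟩ := mem_map.1 hx; exact j.2)
      (exchangeIndex_le _) (by simpa using hmax)
    have hsplit := card_filter_add_card_filter_not (s := Icc 1 (exchangeIndex M g K j₀))
      (p := (g · ∉ Ω))
    simp only [not_not, Nat.card_Icc, Nat.add_sub_cancel, card_map] at hcount hsplit
    calc s.card ≤ (t j₀).card := by simp only [t]; omega
      _ ≤ (s.biUnion t).card := card_le_card (subset_biUnion_of_mem t hj₀)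
  obtain ⟨f, hf, hft⟩ := (all_card_le_biUnion_card_iff_exists_injective t).1 hall
  refine ⟨f, hf, fun j => ?_⟩
  obtain ⟨hfj, hfjΩ⟩ := mem_filter.1 (hft j)
  rw [mem_Icc] at hfj
  have hj := mem_sdiff.1 j.2
  have hidx : exchangeIndex M g K j ≤ K := exchangeIndex_le _
  refine ⟨mem_filter.2 ⟨mem_Icc.2 ⟨hfj.1, hfj.2.trans hidx⟩, hfjΩ⟩, ?_⟩
  refine hM.subset _ _ (indep_insert_initSeg_exchangeIndex (g := g) (K := K) (by omega)
    (hM.subset _ _ hΩ (singleton_subset_iff.2 hj.1))) ?_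
  exact insert_subset_insert _ (initSeg_mono g (by omega))

end Exchange

lemma sum_marg_sdiff_le_sum_greedy {N : Finset α} {M : Finset α → Prop} {Z : Finset α → ℝ}
    {g : ℕ → α} {K : ℕ} (hZ : IsMonotoneSubmodularOn N Z) (hM : IsMatroidIndep M)
    (hK : ∀ S, M S → S.card ≤ K) (hg : Set.InjOn g (Set.Icc 1 K)) (hG : M (initSeg g K))
    (hGN : initSeg g K ⊆ N)
    (hg_max : ∀ i ∈ Icc 1 K, ∀ x ∈ N, x ∉ initSeg g (i - 1) →
      M (insert x (initSeg g (i - 1))) →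
      marg Z x (initSeg g (i - 1)) ≤ marg Z (g i) (initSeg g (i - 1)))
    {Ω : Finset α} (hΩ : M Ω) (hΩN : Ω ⊆ N) :
    ∑ j ∈ Ω \ initSeg g K, marg Z j (initSeg g K)
      ≤ ∑ i ∈ (Icc 1 K).filter (g · ∉ Ω), marg Z (g i) (initSeg g (i - 1)) := by
  obtain ⟨f, hf, hfT⟩ := exists_injective_exchange hM hK hg hG hΩ
  have hseg : ∀ i ∈ Icc 1 K, initSeg g (i - 1) ⊆ initSeg g K := fun i hi =>
    initSeg_mono g (by rw [mem_Icc] at hi; omega)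
  rw [← sum_attach]
  calc ∑ j ∈ (Ω \ initSeg g K).attach, marg Z j (initSeg g K)
      ≤ ∑ j ∈ (Ω \ initSeg g K).attach, marg Z (g (f j)) (initSeg g (f j - 1)) := by
        refine sum_le_sum fun j _ => ?_
        obtain ⟨hjΩ, hjG⟩ := mem_sdiff.1 j.2
        have hfj := (mem_filter.1 (hfT j).1).1
        calc marg Z j (initSeg g K) ≤ marg Z j (initSeg g (f j - 1)) :=
              hZ.marg_antitone _ _ _ (hseg _ hfj) hGN (hΩN hjΩ) hjG
          _ ≤ marg Z (g (f j)) (initSeg g (f j - 1)) :=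
              hg_max _ hfj _ (hΩN hjΩ) (fun h => hjG (hseg _ hfj h)) (hfT j).2
    _ = ∑ i ∈ (Ω \ initSeg g K).attach.image f, marg Z (g i) (initSeg g (i - 1)) :=
        (sum_image (f := fun i => marg Z (g i) (initSeg g (i - 1))) fun a _ b _ h => hf h).symm
    _ ≤ ∑ i ∈ (Icc 1 K).filter (g · ∉ Ω), marg Z (g i) (initSeg g (i - 1)) :=
        sum_le_sum_of_subset_of_nonneg (image_subset_iff.2 fun j _ => (hfT j).1)
          fun i hi _ => hZ.marg_nonneg (hGN (apply_mem_initSeg g (mem_filter.1 hi).1))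
            ((hseg i (mem_filter.1 hi).1).trans hGN)

end

theorem greedy_curvature_approx_general {α : Type*} [DecidableEq α]
    (N : Finset α) (M : Finset α → Prop)
    (hM_ground : ∀ S, M S → S ⊆ N)
    (hM_down : ∀ S T : Finset α, M T → S ⊆ T → M S)
    (hM_aug : ∀ S T : Finset α, M S → M T → S.card < T.card → ∃ x ∈ T \ S, M (insert x S))
    (K : ℕ) (hK_le : ∀ S, M S → S.card ≤ K)
    (Z : Finset α → ℝ)
    (hZ_mono : ∀ S T : Finset α, S ⊆ T → T ⊆ N → Z S ≤ Z T)
    (hZ_submod : ∀ S T : Finset α, ∀ x, S ⊆ T → T ⊆ N → x ∈ N → x ∉ T →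
      Z (insert x T) - Z T ≤ Z (insert x S) - Z S)
    (hZ_empty : Z ∅ = 0)
    (c : ℝ) (hc0 : 0 ≤ c)
    (hcurv : ∀ S ⊆ N, ∀ j ∈ N, j ∉ S → 0 < marg Z j (∅ : Finset α) →
      (1 - c) * marg Z j (∅ : Finset α) ≤ marg Z j S)
    (g : ℕ → α) (hg_inj : Set.InjOn g (Set.Icc 1 K)) (hG_M : M (initSeg g K))
    (hg_max : ∀ i ∈ Finset.Icc 1 K, ∀ x ∈ N, x ∉ initSeg g (i - 1) →
      M (insert x (initSeg g (i - 1))) →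
      marg Z x (initSeg g (i - 1)) ≤ marg Z (g i) (initSeg g (i - 1)))
 :
    ∀ Ω : Finset α, M Ω → Z Ω ≤ (1 + c) * Z (initSeg g K) := by
  intro Ω hΩ
  have hZ : IsMonotoneSubmodularOn N Z := ⟨hZ_mono, hZ_submod⟩
  have hM : IsMatroidIndep M := ⟨hM_down, hM_aug⟩
  have hGN := hM_ground _ hG_M
  have hΩN := hM_ground _ hΩ
  set G := initSeg g K
  set A := ∑ i ∈ (Icc 1 K).filter (g · ∉ Ω), marg Z (g i) (initSeg g (i - 1))
  have hZG : Z G = ∑ i ∈ Icc 1 K, marg Z (g i) (initSeg g (i - 1)) := by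
    simpa [hZ_empty] using sub_eq_sum_marg_initSeg Z g ∅ K
  have hA : A ≤ Z G := hZG ▸ sum_le_sum_of_subset_of_nonneg (filter_subset _ _) fun i hi _ =>
    hZ.marg_nonneg (hGN (apply_mem_initSeg g hi))
      ((initSeg_mono g (by rw [mem_Icc] at hi; omega)).trans hGN)
  have hlower : Z Ω + (1 - c) * A ≤ Z (Ω ∪ G) :=
    hZ.add_one_sub_mul_sum_le hcurv hΩN hGN hg_inj
  have hupper : Z (Ω ∪ G) ≤ Z G + A := calc
    Z (Ω ∪ G) = Z (G ∪ Ω \ G) := by rw [union_sdiff_self_eq_union, union_comm]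
    _ ≤ Z G + ∑ j ∈ Ω \ G, marg Z j G :=
        hZ.apply_union_le_add_sum_marg hGN (sdiff_subset.trans hΩN)
    _ ≤ Z G + A := by
      gcongr
      exact sum_marg_sdiff_le_sum_greedy hZ hM hK_le hg_inj hG_M hGN hg_max hΩ hΩN
  nlinarith [mul_le_mul_of_nonneg_left hA hc0]

/-- Curvature-dependent guarantee: `Z(Ω) ≤ (1 + c)·Z(G)`. -/
theorem greedy_curvature_approx {α : Type*} [DecidableEq α]
    (N : Finset α) (M : Finset α → Prop)
    (hM_ground : ∀ S, M S → S ⊆ N) (hM_empty : M ∅)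
    (hM_down : ∀ S T : Finset α, M T → S ⊆ T → M S)
    (hM_aug : ∀ S T : Finset α, M S → M T → S.card < T.card → ∃ x ∈ T \ S, M (insert x S))
    (K : ℕ) (hK_le : ∀ S, M S → S.card ≤ K) (hK_ex : ∃ B, M B ∧ B.card = K)
    (Z : Finset α → ℝ)
    (hZ_mono : ∀ S T : Finset α, S ⊆ T → T ⊆ N → Z S ≤ Z T)
    (hZ_submod : ∀ S T : Finset α, ∀ x, S ⊆ T → T ⊆ N → x ∈ N → x ∉ T →
      Z (insert x T) - Z T ≤ Z (insert x S) - Z S)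
    (hZ_empty : Z ∅ = 0)
    (c : ℝ) (hc0 : 0 ≤ c) (hc1 : c ≤ 1)
    (hcurv : ∀ S ⊆ N, ∀ j ∈ N, j ∉ S → 0 < marg Z j (∅ : Finset α) →
      (1 - c) * marg Z j (∅ : Finset α) ≤ marg Z j S)
    (g : ℕ → α) (hg_inj : Set.InjOn g (Set.Icc 1 K)) (hG_M : M (initSeg g K))
    (hg_max : ∀ i ∈ Finset.Icc 1 K, ∀ x ∈ N, x ∉ initSeg g (i - 1) →
      M (insert x (initSeg g (i - 1))) →
      marg Z x (initSeg g (i - 1)) ≤ marg Z (g i) (initSeg g (i - 1)))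
 :
    ∀ Ω : Finset α, M Ω → Z Ω ≤ (1 + c) * Z (initSeg g K) :=
  greedy_curvature_approx_general N M hM_ground hM_down hM_aug K hK_le Z hZ_mono hZ_submod hZ_empty
    c hc0 hcurv g hg_inj hG_M hg_max
end

section
/- Let U be a finite set of users and R a finite set of n resources with monotone, submodular, normalized valuations Z_u for each u ∈ U. Let (u_1,r_1), …, (u_n,r_n) be a greedy allocation sequence with partial allocations G^t, output G, and increments ρ_i = ρ^{u_i}_{r_i}(G^{i−1}), and for each i let d_i ≥ 1 be a real number with d_i·ρ^{u'}_{r_i}(G^{i−1}) ≤ ρ_i for every user u' ∈ U ∖ {u_i}. Let Ω be a full allocation, ordered as (û_1, r_1), …, (û_n, r_n) using the same resource order as the greedy sequence. Then for every t ∈ {0, 1, …, n} and every i with (û_i, r_i) ∈ Ω ∖ G: if i > t then ρ^{û_i}_{r_i}(G^t) ≤ ρ_{t+1}, and if 1 ≤ i ≤ t then d_i·ρ^{û_i}_{r_i}(G^t) ≤ ρ_i. -/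
open Finset

/-- The set of resources allocated to user `u` by the allocation `S`. -/
def allocOf {β γ : Type*} [DecidableEq β] [DecidableEq γ]
    (S : Finset (β × γ)) (u : β) : Finset γ :=
  (S.filter fun p => p.1 = u).image Prod.snd

/-- Total valuation `Z(S) = Σ_{u ∈ U} Z_u(S_u)`. -/
def totalVal {β γ : Type*} [DecidableEq β] [DecidableEq γ]
    (U : Finset β) (Zu : β → Finset γ → ℝ) (S : Finset (β × γ)) : ℝ :=
  ∑ u ∈ U, Zu u (allocOf S u)

/-- Marginal gain `ρ^u_r(S) = Z_u(S_u ∪ {r}) − Z_u(S_u)`. -/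
def margP {β γ : Type*} [DecidableEq β] [DecidableEq γ]
    (Zu : β → Finset γ → ℝ) (u : β) (r : γ) (S : Finset (β × γ)) : ℝ :=
  Zu u (insert r (allocOf S u)) - Zu u (allocOf S u)

/-- The partial allocation `{(u 1, r 1), …, (u i, r i)}`. -/
def gAlloc {β γ : Type*} [DecidableEq β] [DecidableEq γ]
    (u : ℕ → β) (r : ℕ → γ) (i : ℕ) : Finset (β × γ) :=
  (Finset.Icc 1 i).image fun j => (u j, r j)

/-- A partial allocation: each resource occurs in at most one pair. -/
def IsPartialAlloc {β γ : Type*} (U : Finset β) (R : Finset γ) (S : Finset (β × γ)) : Prop :=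
  (∀ p ∈ S, p.1 ∈ U ∧ p.2 ∈ R) ∧ ∀ p ∈ S, ∀ q ∈ S, p.2 = q.2 → p = q

/-- A full allocation: every resource occurs in exactly one pair. -/
def IsFullAlloc {β γ : Type*} (U : Finset β) (R : Finset γ) (S : Finset (β × γ)) : Prop :=
  IsPartialAlloc U R S ∧ ∀ r ∈ R, ∃ u, (u, r) ∈ S

/-!
For `i > t` the pair `(û_i, r_i)` was still available when the greedy rule chose step `t + 1`.
For `i ≤ t`, submodularity lowers the marginal of `r_i` for `û_i` from `G^{i-1}` to `G^t`, and since
`(û_i, r_i) ∉ G` we have `û_i ≠ u_i`, so the discrimination bound `d_i` at step `i` applies.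
-/

section Allocations

variable {β γ : Type*} [DecidableEq β] [DecidableEq γ]

theorem mem_allocOf {S : Finset (β × γ)} {w : β} {x : γ} : x ∈ allocOf S w ↔ (w, x) ∈ S := by
  simp [allocOf]

theorem allocOf_mono {S T : Finset (β × γ)} (hST : S ⊆ T) (w : β) : allocOf S w ⊆ allocOf T w :=
  fun _ hx => mem_allocOf.2 (hST (mem_allocOf.1 hx))

theorem gAlloc_mono (u : ℕ → β) (r : ℕ → γ) {s s' : ℕ} (hss' : s ≤ s') :
    gAlloc u r s ⊆ gAlloc u r s' :=
  image_subset_image (Icc_subset_Icc_right hss')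

theorem allocOf_gAlloc_subset_image (u : ℕ → β) (r : ℕ → γ) (s : ℕ) (w : β) :
    allocOf (gAlloc u r s) w ⊆ (Icc 1 s).image r := by
  intro x hx
  obtain ⟨j, hj, hjx⟩ := mem_image.1 (mem_allocOf.1 hx)
  exact mem_image.2 ⟨j, hj, (Prod.ext_iff.1 hjx).2⟩

theorem margP_le_margP_of_allocOf_subset {Zu : β → Finset γ → ℝ} {R : Finset γ} {w : β}
    (hsubmod : ∀ S T : Finset γ, ∀ x, S ⊆ T → T ⊆ R → x ∈ R → x ∉ T →
      Zu w (insert x T) - Zu w T ≤ Zu w (insert x S) - Zu w S)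
    {S T : Finset (β × γ)} {x : γ} (hST : allocOf S w ⊆ allocOf T w) (hTR : allocOf T w ⊆ R)
    (hxR : x ∈ R) (hxT : (w, x) ∉ T) :
    margP Zu w x T ≤ margP Zu w x S :=
  hsubmod _ _ x hST hTR hxR (mt mem_allocOf.1 hxT)

theorem not_mem_image_Icc_of_injOn {r : ℕ → γ} {n t i : ℕ} (hr : Set.InjOn r (Set.Icc 1 n))
    (hti : t < i) (hi : i ∈ Icc 1 n) : r i ∉ (Icc 1 t).image r := by
  intro hmem
  obtain ⟨j, hj, hji⟩ := mem_image.1 hmem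
  rw [mem_Icc] at hi hj
  have : j = i := hr ⟨hj.1, by omega⟩ ⟨hi.1, hi.2⟩ hji
  omega

end Allocations

theorem partition_greedy_vs_optimal_marginals_general {β γ : Type*} [DecidableEq β] [DecidableEq γ]
    (U : Finset β) (R : Finset γ) (n : ℕ)
    (Zu : β → Finset γ → ℝ)
    (hsubmod : ∀ u ∈ U, ∀ S T : Finset γ, ∀ x, S ⊆ T → T ⊆ R → x ∈ R → x ∉ T →
      Zu u (insert x T) - Zu u T ≤ Zu u (insert x S) - Zu u S)
    (u : ℕ → β) (r : ℕ → γ)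
    (hr_inj : Set.InjOn r (Set.Icc 1 n)) (hr_img : (Finset.Icc 1 n).image r = R)
    (hgreedy : ∀ i ∈ Finset.Icc 1 n, ∀ u' ∈ U, ∀ r' ∈ R,
      r' ∉ (Finset.Icc 1 (i - 1)).image r →
      margP Zu u' r' (gAlloc u r (i - 1)) ≤ margP Zu (u i) (r i) (gAlloc u r (i - 1)))
    (d : ℕ → ℝ) (hd : ∀ i ∈ Finset.Icc 1 n, 1 ≤ d i)
    (hdisc : ∀ i ∈ Finset.Icc 1 n, ∀ u' ∈ U, u' ≠ u i →
      d i * margP Zu u' (r i) (gAlloc u r (i - 1)) ≤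
        margP Zu (u i) (r i) (gAlloc u r (i - 1)))
    (uhat : ℕ → β) (Ω : Finset (β × γ))
    (hΩ_img : Ω = (Finset.Icc 1 n).image fun i => (uhat i, r i))
    (hΩ_full : IsFullAlloc U R Ω) :
    ∀ t ≤ n, ∀ i ∈ Finset.Icc 1 n, (uhat i, r i) ∉ gAlloc u r n →
      (t < i → margP Zu (uhat i) (r i) (gAlloc u r t) ≤
        margP Zu (u (t + 1)) (r (t + 1)) (gAlloc u r t)) ∧
      (i ≤ t → d i * margP Zu (uhat i) (r i) (gAlloc u r t) ≤
        margP Zu (u i) (r i) (gAlloc u r (i - 1))) := by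
  intro t ht i hi hG
  have huhat : uhat i ∈ U := (hΩ_full.1.1 _ (hΩ_img ▸ mem_image_of_mem _ hi)).1
  have hri : r i ∈ R := hr_img ▸ mem_image_of_mem r hi
  have hne : uhat i ≠ u i := fun h => hG (h ▸ mem_image_of_mem _ hi)
  refine ⟨fun hti => ?_, fun hit => ?_⟩
  · have hstep : t + 1 ∈ Icc 1 n := mem_Icc.2 ⟨le_add_self, hti.trans_le (mem_Icc.1 hi).2⟩
    simpa using hgreedy (t + 1) hstep (uhat i) huhat (r i) hri
      (by simpa using not_mem_image_Icc_of_injOn hr_inj hti hi)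
  · have hdiminish : margP Zu (uhat i) (r i) (gAlloc u r t) ≤
        margP Zu (uhat i) (r i) (gAlloc u r (i - 1)) :=
      margP_le_margP_of_allocOf_subset (hsubmod _ huhat)
        (allocOf_mono (gAlloc_mono u r (by omega)) _)
        ((allocOf_gAlloc_subset_image u r t _).trans (hr_img ▸ image_subset_image
          (Icc_subset_Icc_right ht)))
        hri (fun h => hG (gAlloc_mono u r ht h))
    calc d i * margP Zu (uhat i) (r i) (gAlloc u r t)
        ≤ d i * margP Zu (uhat i) (r i) (gAlloc u r (i - 1)) :=
          mul_le_mul_of_nonneg_left hdiminish (zero_le_one.trans (hd i hi))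
      _ ≤ margP Zu (u i) (r i) (gAlloc u r (i - 1)) := hdisc i hi (uhat i) huhat hne

/-- Partition analogue of the marginal bounds: for `(û_i, r_i) ∈ Ω ∖ G`,
if `i > t` then `ρ^{û_i}_{r_i}(G^t) ≤ ρ_{t+1}`, and if `i ≤ t` then
`d_i·ρ^{û_i}_{r_i}(G^t) ≤ ρ_i`. -/
theorem partition_greedy_vs_optimal_marginals {β γ : Type*} [DecidableEq β] [DecidableEq γ]
    (U : Finset β) (R : Finset γ) (n : ℕ) (hn : R.card = n)
    (Zu : β → Finset γ → ℝ)
    (hmono : ∀ u ∈ U, ∀ S T : Finset γ, S ⊆ T → T ⊆ R → Zu u S ≤ Zu u T)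
    (hsubmod : ∀ u ∈ U, ∀ S T : Finset γ, ∀ x, S ⊆ T → T ⊆ R → x ∈ R → x ∉ T →
      Zu u (insert x T) - Zu u T ≤ Zu u (insert x S) - Zu u S)
    (hzero : ∀ u ∈ U, Zu u (∅ : Finset γ) = 0)
    (u : ℕ → β) (r : ℕ → γ)
    (hu_mem : ∀ i ∈ Finset.Icc 1 n, u i ∈ U)
    (hr_inj : Set.InjOn r (Set.Icc 1 n)) (hr_img : (Finset.Icc 1 n).image r = R)
    (hgreedy : ∀ i ∈ Finset.Icc 1 n, ∀ u' ∈ U, ∀ r' ∈ R,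
      r' ∉ (Finset.Icc 1 (i - 1)).image r →
      margP Zu u' r' (gAlloc u r (i - 1)) ≤ margP Zu (u i) (r i) (gAlloc u r (i - 1)))
    (d : ℕ → ℝ) (hd : ∀ i ∈ Finset.Icc 1 n, 1 ≤ d i)
    (hdisc : ∀ i ∈ Finset.Icc 1 n, ∀ u' ∈ U, u' ≠ u i →
      d i * margP Zu u' (r i) (gAlloc u r (i - 1)) ≤
        margP Zu (u i) (r i) (gAlloc u r (i - 1)))
    (uhat : ℕ → β) (Ω : Finset (β × γ))
    (hΩ_img : Ω = (Finset.Icc 1 n).image fun i => (uhat i, r i))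
    (hΩ_full : IsFullAlloc U R Ω) :
    ∀ t ≤ n, ∀ i ∈ Finset.Icc 1 n, (uhat i, r i) ∉ gAlloc u r n →
      (t < i → margP Zu (uhat i) (r i) (gAlloc u r t) ≤
        margP Zu (u (t + 1)) (r (t + 1)) (gAlloc u r t)) ∧
      (i ≤ t → d i * margP Zu (uhat i) (r i) (gAlloc u r t) ≤
        margP Zu (u i) (r i) (gAlloc u r (i - 1))) :=
  partition_greedy_vs_optimal_marginals_general U R n Zu hsubmod u r hr_inj hr_img hgreedy d hd
    hdisc uhat Ω hΩ_img hΩ_full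
end
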